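/- (Bernstein's inequality for Legendre polynomials, as used) For every m ≥ 1 and every t ∈ [−1,1], the m-th Legendre polynomial satisfies |P_m(t)| ≤ min{1, √(2/(πm)) · (1 − t²)^{-1/4}} (with the second bound interpreted as +∞ at t = ±1). -/

import Mathlib

/-!
Both bounds come from monotone functionals of solutions `y` of Legendre's equation
`(1 - x²) y'' - 2 x y' + M y = 0`, where `M = m (m + 1)` for `P_m`; by parity it suffices to
look at `x ∈ [0, 1]`.

Sonin's function `M y² + (1 - x²) y'²` has derivative `2 x y'²`, so it increases on `[0, 1]`
and `M P_m(x)² ≤ M P_m(1)² = M`.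

For Bernstein's bound let `w = (2M(1 - x²) + 1) y² - 2x(1 - x²) y y' + 2(1 - x²)² y'²` and
`d = (4M + 1)(1 - x²) + 1`. Since `2w - d y² = (x y - 2(1 - x²) y')²`, the majorant `v = 2w/d`
dominates `y²`, and `(1 - x²) v²` has derivative `-8 x w (x y - 2(1 - x²) y')² / d³ ≤ 0`.
Hence `√(1 - x²) y(x)² ≤ v(0) = y(0)² + 2 y'(0)² / (2M + 1)`. For `P_m` one of `P_m(0)`,
`P_m'(0)` vanishes and the other is a central binomial coefficient over `4^r`, and Wallis'
inequality `W_r ≥ (2r + 1)/(2r + 2) · π/2` bounds `v(0)` by `2/(πm)`.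
-/

open Polynomial Real

/-- The `m`-th Legendre polynomial, via the Rodrigues formula
`P_m = (2^m m!)⁻¹ (d/dx)^m (x² - 1)^m`, normalized so that `P_m(1) = 1`. -/
noncomputable def legendre (m : ℕ) : Polynomial ℝ :=
  (((2 : ℝ) ^ m * (m.factorial : ℝ))⁻¹) •
    (derivative^[m] (((X : Polynomial ℝ) ^ 2 - 1) ^ m))

namespace Polynomial

theorem eval_iterate_derivative_X_sub_C_pow_mul {R : Type*} [CommRing R] (a : R)
    (n : ℕ) (q : R[X]) :
    (derivative^[n] ((X - C a) ^ n * q)).eval a = n.factorial * q.eval a := by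
  rw [iterate_derivative_mul, eval_finsetSum,
    Finset.sum_eq_single_of_mem _ (Finset.mem_range.mpr n.succ_pos)]
  · simp [iterate_derivative_X_sub_pow_self]
  · intro k hk hk0
    rw [iterate_derivative_X_sub_pow, Nat.sub_sub_self (Finset.mem_range_succ_iff.mp hk)]
    simp [zero_pow hk0]

theorem iterate_derivative_comp_neg_X {R : Type*} [CommRing R] (p : R[X]) (k : ℕ) :
    derivative^[k] (p.comp (-X)) = (-1) ^ k * (derivative^[k] p).comp (-X) := by
  induction k generalizing p with
  | zero => simp
  | succ k ih => simp [ih (derivative p), derivative_comp, pow_succ]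

theorem eval_zero_iterate_derivative {R : Type*} [CommSemiring R] (p : R[X]) (n : ℕ) :
    (derivative^[n] p).eval 0 = n.factorial * p.coeff n := by
  rw [← coeff_zero_eq_eval_zero, coeff_iterate_derivative]
  simp [Nat.descFactorial_self, nsmul_eq_mul]

theorem coeff_X_sq_sub_one_pow {R : Type*} [CommRing R] (m k : ℕ) :
    ((X ^ 2 - 1 : R[X]) ^ m).coeff k =
      if 2 ∣ k then (-1) ^ (m - k / 2) * (m.choose (k / 2) : R) else 0 := by
  have : (X ^ 2 - 1 : R[X]) ^ m = expand R 2 ((X + C (-1)) ^ m) := by simp [sub_eq_add_neg]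
  rw [this, coeff_expand two_pos, coeff_X_add_C_pow]

theorem X_sq_sub_one_mul_derivative_pow {R : Type*} [CommRing R] (m : ℕ) :
    (X ^ 2 - 1 : R[X]) * derivative ((X ^ 2 - 1) ^ m) =
      2 * (m : R[X]) * X * (X ^ 2 - 1) ^ m := by
  cases m with
  | zero => simp
  | succ m =>
    rw [derivative_pow_succ]
    simp only [derivative_sub, derivative_X_pow, derivative_one, ← C_eq_natCast]
    simp only [map_natCast, map_add, map_one, Nat.cast_ofNat, map_ofNat]
    push_cast
    ring

end Polynomial

def IsLegendreSolution (M : ℝ) (p : ℝ[X]) : Prop :=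
  (1 - X ^ 2) * derivative (derivative p) - 2 * X * derivative p + C M * p = 0

theorem IsLegendreSolution.C_mul {M : ℝ} {p : ℝ[X]} (hp : IsLegendreSolution M p) (c : ℝ) :
    IsLegendreSolution M (C c * p) := by
  unfold IsLegendreSolution at hp ⊢
  simp only [derivative_C_mul]
  linear_combination C c * hp

theorem isLegendreSolution_iterate_derivative {m : ℕ} {u : ℝ[X]}
    (hu : (X ^ 2 - 1) * derivative u = 2 * (m : ℝ[X]) * X * u) :
    IsLegendreSolution (m * (m + 1)) (derivative^[m] u) := by
  -- differentiate `hu` once, then `m` more times by the Leibniz rule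
  have h1 : derivative^[2] u * X ^ 2 - derivative^[2] u
      - C (2 * m - 2 : ℝ) * (derivative u * X) - C (2 * m : ℝ) * u = 0 := by
    have := congrArg derivative hu
    simp only [derivative_mul, derivative_sub, derivative_X_pow, derivative_one, derivative_X,
      derivative_ofNat, derivative_natCast, Nat.cast_ofNat, C_ofNat] at this
    simp only [Function.iterate_succ, Function.iterate_zero, Function.comp_apply, map_sub,
      map_mul, C_ofNat, map_natCast, id]
    linear_combination this
  have h2 := congrArg (derivative^[m]) h1
  simp only [iterate_derivative_sub, iterate_derivative_C_mul,
    iterate_derivative_derivative_mul_X_sq, iterate_derivative_derivative_mul_X,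
    iterate_derivative_zero, ← Function.iterate_add_apply, nsmul_eq_mul] at h2
  rw [IsLegendreSolution]
  simp only [← Function.iterate_succ_apply' derivative]
  have hcast : ((m * (m - 1) : ℕ) : ℝ[X]) = (m : ℝ[X]) * m - m := by
    cases m <;> simp; ring
  simp only [map_sub, map_mul, map_add, map_one, C_ofNat, map_natCast, hcast, Nat.cast_mul,
    Nat.cast_ofNat] at h2 ⊢
  linear_combination -h2

theorem legendre_eq_C_mul (m : ℕ) :
    legendre m = C ((2 ^ m * m.factorial : ℝ)⁻¹) * derivative^[m] ((X ^ 2 - 1) ^ m) :=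
  smul_eq_C_mul _

theorem legendre_eval_one (m : ℕ) : (legendre m).eval 1 = 1 := by
  have h : (X ^ 2 - 1 : ℝ[X]) ^ m = (X - C 1) ^ m * (X + 1) ^ m := by
    rw [← mul_pow, map_one]; ring
  rw [legendre, eval_smul, h, eval_iterate_derivative_X_sub_C_pow_mul]
  norm_num
  field_simp

theorem legendre_comp_neg_X (m : ℕ) : (legendre m).comp (-X) = (-1) ^ m * legendre m := by
  have hu : ((X ^ 2 - 1 : ℝ[X]) ^ m).comp (-X) = (X ^ 2 - 1) ^ m := by simp
  have := iterate_derivative_comp_neg_X ((X ^ 2 - 1 : ℝ[X]) ^ m) m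
  rw [hu] at this
  have key : (derivative^[m] ((X ^ 2 - 1 : ℝ[X]) ^ m)).comp (-X)
      = (-1) ^ m * derivative^[m] ((X ^ 2 - 1) ^ m) := by
    conv_rhs => rw [this, ← mul_assoc, ← mul_pow]
    simp
  rw [legendre_eq_C_mul, mul_comp, C_comp, key]
  ring

theorem legendre_eval_neg (m : ℕ) (x : ℝ) :
    (legendre m).eval (-x) = (-1) ^ m * (legendre m).eval x := by
  simpa using congrArg (eval x) (legendre_comp_neg_X m)

theorem abs_legendre_eval_abs (m : ℕ) (x : ℝ) :
    |(legendre m).eval (|x|)| = |(legendre m).eval x| := by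
  rcases abs_choice x with h | h <;> simp [h, legendre_eval_neg, abs_mul]

theorem isLegendreSolution_legendre (m : ℕ) :
    IsLegendreSolution (m * (m + 1)) (legendre m) := by
  rw [legendre_eq_C_mul]
  exact (isLegendreSolution_iterate_derivative (X_sq_sub_one_mul_derivative_pow m)).C_mul _

theorem legendre_eval_zero (m : ℕ) :
    (legendre m).eval 0 = ((X ^ 2 - 1 : ℝ[X]) ^ m).coeff m / 2 ^ m := by
  rw [legendre_eq_C_mul, eval_mul, eval_C, eval_zero_iterate_derivative]
  field_simp

theorem derivative_legendre_eval_zero (m : ℕ) :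
    (derivative (legendre m)).eval 0 =
      (m + 1) * ((X ^ 2 - 1 : ℝ[X]) ^ m).coeff (m + 1) / 2 ^ m := by
  rw [legendre_eq_C_mul, derivative_C_mul, ← Function.iterate_succ_apply' derivative, eval_mul,
    eval_C, eval_zero_iterate_derivative, Nat.factorial_succ]
  push_cast
  field_simp

theorem legendre_two_mul_eval_zero (r : ℕ) :
    (legendre (2 * r)).eval 0 = (-1) ^ r * (r.centralBinom / 4 ^ r) := by
  rw [legendre_eval_zero, coeff_X_sq_sub_one_pow, if_pos (dvd_mul_right 2 r),
    Nat.mul_div_cancel_left r two_pos, show 2 * r - r = r by omega, pow_mul,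
    Nat.centralBinom_eq_two_mul_choose]
  norm_num
  ring

theorem derivative_legendre_two_mul_eval_zero (r : ℕ) :
    (derivative (legendre (2 * r))).eval 0 = 0 := by
  rw [derivative_legendre_eval_zero, coeff_X_sq_sub_one_pow, if_neg (by omega)]
  simp

theorem legendre_two_mul_add_one_eval_zero (r : ℕ) :
    (legendre (2 * r + 1)).eval 0 = 0 := by
  rw [legendre_eval_zero, coeff_X_sq_sub_one_pow, if_neg (by omega)]
  simp

theorem derivative_legendre_two_mul_add_one_eval_zero (r : ℕ) :
    (derivative (legendre (2 * r + 1))).eval 0 =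
      (-1) ^ r * ((2 * r + 1) * (r.centralBinom / 4 ^ r)) := by
  have hchoose :
      ((2 * r + 1 + 1) * (2 * r + 1).choose (r + 1) : ℝ) = 2 * (2 * r + 1) * r.centralBinom := by
    have : ((2 * r + 1) * (2 * r).choose r : ℝ) = (2 * r + 1).choose (r + 1) * (r + 1) := by
      exact_mod_cast Nat.add_one_mul_choose_eq (2 * r) r
    rw [Nat.centralBinom_eq_two_mul_choose]
    linear_combination (-2) * this
  rw [derivative_legendre_eval_zero, coeff_X_sq_sub_one_pow, if_pos ⟨r + 1, by ring⟩,
    show (2 * r + 1 + 1) / 2 = r + 1 by omega, show 2 * r + 1 - (r + 1) = r by omega]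
  push_cast
  rw [mul_left_comm, hchoose, pow_succ, pow_mul]
  norm_num
  ring

theorem centralBinom_div_four_pow_sq_mul_W (r : ℕ) :
    (r.centralBinom / 4 ^ r : ℝ) ^ 2 * (2 * r + 1) * Wallis.W r = 1 := by
  have hcb : (r.centralBinom * r.factorial * r.factorial : ℝ) = (2 * r).factorial := by
    have := Nat.choose_mul_factorial_mul_factorial (n := 2 * r) (k := r) (by omega)
    rw [show 2 * r - r = r by omega] at this
    rw [Nat.centralBinom_eq_two_mul_choose]
    exact_mod_cast this
  have hpos : (r.centralBinom : ℝ) ≠ 0 := mod_cast r.centralBinom_ne_zero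
  have h16 : (2 : ℝ) ^ (4 * r) = (4 ^ r) ^ 2 := by
    rw [← pow_mul, show (4 : ℝ) = 2 ^ 2 by norm_num, ← pow_mul]
    ring_nf
  rw [Wallis.W_eq_factorial_ratio, ← hcb, h16]
  field_simp

theorem pi_mul_centralBinom_div_four_pow_sq_le (r : ℕ) :
    π * (2 * r + 1) ^ 2 * (r.centralBinom / 4 ^ r : ℝ) ^ 2 ≤ 4 * (r + 1) := by
  have h := centralBinom_div_four_pow_sq_mul_W r
  generalize (r.centralBinom / 4 ^ r : ℝ) = c at h ⊢
  have hW := mul_le_mul_of_nonneg_left (Wallis.le_W r) (by positivity : 0 ≤ c ^ 2 * (2 * r + 1))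
  rw [h] at hW
  field_simp at hW
  nlinarith

theorem legendre_eval_zero_sq_add_le {m : ℕ} (hm : 1 ≤ m) :
    (legendre m).eval 0 ^ 2 + 2 * (derivative (legendre m)).eval 0 ^ 2 / (2 * (m * (m + 1)) + 1)
      ≤ 2 / (π * m) := by
  have hsign (r : ℕ) (x : ℝ) : ((-1) ^ r * x) ^ 2 = x ^ 2 := by
    rw [mul_pow, ← pow_mul, pow_mul', neg_one_sq, one_pow, one_mul]
  obtain ⟨r, rfl | rfl⟩ := Nat.even_or_odd' m
  · rw [legendre_two_mul_eval_zero, derivative_legendre_two_mul_eval_zero, hsign]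
    have hW := pi_mul_centralBinom_div_four_pow_sq_le r
    generalize (r.centralBinom / 4 ^ r : ℝ) = c at hW ⊢
    have hr : (1 : ℝ) ≤ r := by exact_mod_cast (by omega : 1 ≤ r)
    have hc : π * c ^ 2 * r ≤ 1 := by
      refine le_of_mul_le_mul_right (a := (2 * r + 1 : ℝ) ^ 2) ?_ (by positivity)
      nlinarith
    rw [le_div_iff₀ (by positivity)]
    push_cast
    rw [zero_pow two_ne_zero, mul_zero, zero_div, add_zero]
    linarith
  · rw [legendre_two_mul_add_one_eval_zero, derivative_legendre_two_mul_add_one_eval_zero, hsign]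
    have hW := pi_mul_centralBinom_div_four_pow_sq_le r
    generalize (r.centralBinom / 4 ^ r : ℝ) = c at hW ⊢
    rw [le_div_iff₀ (by positivity)]
    push_cast
    rw [zero_pow two_ne_zero, zero_add, div_mul_eq_mul_div, div_le_iff₀ (by positivity)]
    nlinarith [pi_pos]

theorem hasDerivAt_one_sub_sq (x : ℝ) : HasDerivAt (fun y : ℝ => 1 - y ^ 2) (-(2 * x)) x := by
  simpa using (hasDerivAt_pow 2 x).const_sub 1

noncomputable def soninFun (M : ℝ) (p : ℝ[X]) (x : ℝ) : ℝ :=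
  M * p.eval x ^ 2 + (1 - x ^ 2) * (derivative p).eval x ^ 2

noncomputable def bernsteinWeight (M : ℝ) (p : ℝ[X]) (x : ℝ) : ℝ :=
  (2 * M * (1 - x ^ 2) + 1) * p.eval x ^ 2
    - 2 * x * (1 - x ^ 2) * p.eval x * (derivative p).eval x
    + 2 * (1 - x ^ 2) ^ 2 * (derivative p).eval x ^ 2

noncomputable def bernsteinMajorant (M : ℝ) (p : ℝ[X]) (x : ℝ) : ℝ :=
  2 * bernsteinWeight M p x / ((4 * M + 1) * (1 - x ^ 2) + 1)

theorem two_mul_bernsteinWeight_sub (M : ℝ) (p : ℝ[X]) (x : ℝ) :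
    2 * bernsteinWeight M p x - ((4 * M + 1) * (1 - x ^ 2) + 1) * p.eval x ^ 2
      = (x * p.eval x - 2 * (1 - x ^ 2) * (derivative p).eval x) ^ 2 := by
  unfold bernsteinWeight
  ring

theorem bernsteinMajorant_denom_pos {M x : ℝ} (hM : 0 ≤ M) (hx : x ^ 2 ≤ 1) :
    0 < (4 * M + 1) * (1 - x ^ 2) + 1 := by
  have : 0 ≤ (4 * M + 1) * (1 - x ^ 2) := mul_nonneg (by linarith) (by linarith)
  linarith

theorem sq_eval_le_bernsteinMajorant {M : ℝ} (hM : 0 ≤ M) (p : ℝ[X]) {x : ℝ}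
    (hx : x ^ 2 ≤ 1) :
    p.eval x ^ 2 ≤ bernsteinMajorant M p x := by
  rw [bernsteinMajorant, le_div_iff₀ (bernsteinMajorant_denom_pos hM hx)]
  nlinarith [two_mul_bernsteinWeight_sub M p x,
    sq_nonneg (x * p.eval x - 2 * (1 - x ^ 2) * (derivative p).eval x)]

theorem bernsteinWeight_nonneg {M : ℝ} (hM : 0 ≤ M) (p : ℝ[X]) {x : ℝ} (hx : x ^ 2 ≤ 1) :
    0 ≤ bernsteinWeight M p x := by
  nlinarith [two_mul_bernsteinWeight_sub M p x, bernsteinMajorant_denom_pos hM hx,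
    sq_nonneg (p.eval x), sq_nonneg (x * p.eval x - 2 * (1 - x ^ 2) * (derivative p).eval x)]

theorem bernsteinMajorant_zero {M : ℝ} (hM : 2 * M + 1 ≠ 0) (p : ℝ[X]) :
    bernsteinMajorant M p 0 = p.eval 0 ^ 2 + 2 * (derivative p).eval 0 ^ 2 / (2 * M + 1) := by
  simp only [bernsteinMajorant, bernsteinWeight]
  rw [show ((4 * M + 1) * (1 - 0 ^ 2) + 1 : ℝ) = 2 * (2 * M + 1) by ring]
  field_simp
  ring

namespace IsLegendreSolution

variable {M : ℝ} {p : ℝ[X]}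

theorem eval_eq_zero (hp : IsLegendreSolution M p) (x : ℝ) :
    (1 - x ^ 2) * (derivative (derivative p)).eval x - 2 * x * (derivative p).eval x
      + M * p.eval x = 0 := by
  simpa using congrArg (eval x) hp

theorem hasDerivAt_soninFun (hp : IsLegendreSolution M p) (x : ℝ) :
    HasDerivAt (soninFun M p) (2 * x * (derivative p).eval x ^ 2) x := by
  have hP := p.hasDerivAt x
  have hP' := (derivative p).hasDerivAt x
  have hs := hasDerivAt_one_sub_sq x
  refine (((hP.pow 2).const_mul M).add (hs.mul (hP'.pow 2))).congr_deriv ?_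
  simp only [Pi.pow_apply, Nat.cast_ofNat, Nat.add_one_sub_one, pow_one]
  linear_combination (2 * (derivative p).eval x) * hp.eval_eq_zero x

theorem monotoneOn_soninFun (hp : IsLegendreSolution M p) :
    MonotoneOn (soninFun M p) (Set.Ici 0) := by
  refine monotoneOn_of_deriv_nonneg (convex_Ici 0)
    (fun x _ => (hp.hasDerivAt_soninFun x).continuousAt.continuousWithinAt)
    (fun x _ => (hp.hasDerivAt_soninFun x).differentiableAt.differentiableWithinAt) fun x hx => ?_
  rw [interior_Ici] at hx
  rw [(hp.hasDerivAt_soninFun x).deriv]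
  have : 0 < x := hx
  positivity

theorem sq_eval_le_sq_eval_one (hp : IsLegendreSolution M p) (hM : 0 < M) {x : ℝ}
    (hx : x ∈ Set.Icc 0 1) : p.eval x ^ 2 ≤ p.eval 1 ^ 2 := by
  have hmono := hp.monotoneOn_soninFun hx.1 (Set.mem_Ici.mpr zero_le_one) hx.2
  have : 0 ≤ (1 - x ^ 2) * (derivative p).eval x ^ 2 := by
    have : x ^ 2 ≤ 1 := by nlinarith [hx.1, hx.2]
    positivity
  simp only [soninFun] at hmono
  nlinarith

theorem hasDerivAt_bernsteinWeight (hp : IsLegendreSolution M p) (x : ℝ) :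
    HasDerivAt (bernsteinWeight M p)
      (-2 * x * (M * p.eval x ^ 2 - x * p.eval x * (derivative p).eval x
        + (1 - x ^ 2) * (derivative p).eval x ^ 2)) x := by
  have hP := p.hasDerivAt x
  have hP' := (derivative p).hasDerivAt x
  have hs := hasDerivAt_one_sub_sq x
  refine (((((hs.const_mul (2 * M)).add_const 1).mul (hP.pow 2)).sub
    ((((hasDerivAt_id x).const_mul 2).mul hs).mul hP |>.mul hP')).add
    (((hs.pow 2).const_mul 2).mul (hP'.pow 2))).congr_deriv ?_
  simp only [Pi.pow_apply, Pi.mul_apply, Nat.cast_ofNat, Nat.add_one_sub_one, pow_one, id]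
  linear_combination (-2 * x * p.eval x + 4 * (1 - x ^ 2) * (derivative p).eval x)
    * hp.eval_eq_zero x

theorem hasDerivAt_one_sub_sq_mul_bernsteinMajorant_sq (hp : IsLegendreSolution M p) {x : ℝ}
    (hd : (4 * M + 1) * (1 - x ^ 2) + 1 ≠ 0) :
    HasDerivAt (fun y => (1 - y ^ 2) * bernsteinMajorant M p y ^ 2)
      (-8 * x * bernsteinWeight M p x
        * (x * p.eval x - 2 * (1 - x ^ 2) * (derivative p).eval x) ^ 2
        / ((4 * M + 1) * (1 - x ^ 2) + 1) ^ 3) x := by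
  have hs := hasDerivAt_one_sub_sq x
  have hv : HasDerivAt (bernsteinMajorant M p)
      ((2 * (-2 * x * (M * p.eval x ^ 2 - x * p.eval x * (derivative p).eval x
        + (1 - x ^ 2) * (derivative p).eval x ^ 2)) * ((4 * M + 1) * (1 - x ^ 2) + 1)
        - 2 * bernsteinWeight M p x * ((4 * M + 1) * -(2 * x)))
        / ((4 * M + 1) * (1 - x ^ 2) + 1) ^ 2) x :=
    ((hp.hasDerivAt_bernsteinWeight x).const_mul 2).div
      ((hs.const_mul (4 * M + 1)).add_const 1) hd
  refine (hs.mul (hv.pow 2)).congr_deriv ?_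
  simp only [Pi.pow_apply, bernsteinMajorant, Nat.cast_ofNat, Nat.add_one_sub_one, pow_one]
  field_simp
  unfold bernsteinWeight
  ring

theorem antitoneOn_one_sub_sq_mul_bernsteinMajorant_sq (hp : IsLegendreSolution M p)
    (hM : 0 ≤ M) :
    AntitoneOn (fun x => (1 - x ^ 2) * bernsteinMajorant M p x ^ 2) (Set.Icc 0 1) := by
  have hderiv {x : ℝ} (hx : x ∈ Set.Icc (0 : ℝ) 1) :=
    hp.hasDerivAt_one_sub_sq_mul_bernsteinMajorant_sq
      (bernsteinMajorant_denom_pos hM (x := x) (by nlinarith [hx.1, hx.2])).ne'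
  refine antitoneOn_of_deriv_nonpos (convex_Icc 0 1)
    (fun x hx => (hderiv hx).continuousAt.continuousWithinAt)
    (fun x hx => (hderiv (interior_subset hx)).differentiableAt.differentiableWithinAt)
    fun x hx => ?_
  rw [interior_Icc] at hx
  have hx2 : x ^ 2 ≤ 1 := by nlinarith [hx.1, hx.2]
  rw [(hderiv (Set.Ioo_subset_Icc_self hx)).deriv, neg_mul, neg_mul, neg_mul, neg_div]
  refine neg_nonpos.mpr (div_nonneg ?_ (pow_pos (bernsteinMajorant_denom_pos hM hx2) 3).le)
  exact mul_nonneg (mul_nonneg (by linarith [hx.1]) (bernsteinWeight_nonneg hM p hx2))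
    (sq_nonneg _)

theorem sqrt_one_sub_sq_mul_sq_eval_le (hp : IsLegendreSolution M p) (hM : 0 ≤ M) {x : ℝ}
    (hx : x ∈ Set.Icc 0 1) :
    √(1 - x ^ 2) * p.eval x ^ 2 ≤ bernsteinMajorant M p 0 := by
  have hx2 : x ^ 2 ≤ 1 := by nlinarith [hx.1, hx.2]
  have hpx := sq_eval_le_bernsteinMajorant hM p hx2
  have hp0 := sq_eval_le_bernsteinMajorant hM p (x := 0) (by norm_num)
  have hF := hp.antitoneOn_one_sub_sq_mul_bernsteinMajorant_sq hM
    (Set.left_mem_Icc.mpr zero_le_one) hx hx.1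
  norm_num at hF
  calc √(1 - x ^ 2) * p.eval x ^ 2 ≤ √(1 - x ^ 2) * bernsteinMajorant M p x :=
        mul_le_mul_of_nonneg_left hpx (sqrt_nonneg _)
    _ = √((1 - x ^ 2) * bernsteinMajorant M p x ^ 2) := by
        rw [sqrt_mul (by linarith), sqrt_sq ((sq_nonneg _).trans hpx)]
    _ ≤ √(bernsteinMajorant M p 0 ^ 2) := sqrt_le_sqrt hF
    _ = bernsteinMajorant M p 0 := sqrt_sq ((sq_nonneg _).trans hp0)

end IsLegendreSolution

theorem abs_le_sqrt_mul_rpow_neg_quarter {a c s : ℝ} (hs : 0 < s) (h : √s * a ^ 2 ≤ c) :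
    |a| ≤ √c * s ^ (-(1 / 4 : ℝ)) := by
  have hc : 0 ≤ c := (by positivity : 0 ≤ √s * a ^ 2).trans h
  have hquarter : (s ^ (-(1 / 4 : ℝ))) ^ 2 = (√s)⁻¹ := by
    rw [← rpow_natCast, ← rpow_mul hs.le, sqrt_eq_rpow, ← rpow_neg hs.le]
    norm_num
  rw [← sqrt_sq (by positivity : 0 ≤ √c * s ^ (-(1 / 4 : ℝ))), mul_pow, sq_sqrt hc,
    hquarter]
  refine abs_le_sqrt ?_
  rw [← div_eq_mul_inv, le_div_iff₀ (sqrt_pos.mpr hs)]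
  linarith

/-- **Bernstein's inequality for Legendre polynomials.** For `m ≥ 1` and `t ∈ [−1,1]`,
`|P_m(t)| ≤ min {1, √(2/(πm)) (1−t²)^{-1/4}}` (the second bound being interpreted as `+∞`
at `t = ±1`). -/
theorem stmt_15 (m : ℕ) (hm : 1 ≤ m) (t : ℝ) (ht : t ∈ Set.Icc (-1 : ℝ) 1) :
    |(legendre m).eval t| ≤ 1 ∧
      (t ^ 2 < 1 →
        |(legendre m).eval t| ≤
          Real.sqrt (2 / (Real.pi * m)) * (1 - t ^ 2) ^ (-(1 / 4 : ℝ))) := by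
  have hp := isLegendreSolution_legendre m
  have hM : (0 : ℝ) < m * (m + 1) := by
    have : (1 : ℝ) ≤ m := mod_cast hm
    positivity
  have ht' : |t| ∈ Set.Icc 0 1 := ⟨abs_nonneg t, abs_le.mpr ht⟩
  refine ⟨?_, fun ht2 => abs_le_sqrt_mul_rpow_neg_quarter (by linarith) ?_⟩
  · have := hp.sq_eval_le_sq_eval_one hM ht'
    rwa [legendre_eval_one, one_pow, ← sq_abs, abs_legendre_eval_abs, sq_le_one_iff_abs_le_one,
      abs_abs] at this
  · calc √(1 - t ^ 2) * (legendre m).eval t ^ 2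
          = √(1 - |t| ^ 2) * (legendre m).eval |t| ^ 2 := by
          rw [sq_abs, ← sq_abs ((legendre m).eval |t|), abs_legendre_eval_abs, sq_abs]
      _ ≤ bernsteinMajorant (m * (m + 1)) (legendre m) 0 :=
          hp.sqrt_one_sub_sq_mul_sq_eval_le hM.le ht'
      _ = _ := bernsteinMajorant_zero (by positivity) _
      _ ≤ 2 / (π * m) := legendre_eval_zero_sq_add_le hm
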